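/- Let N be a strictly convex norm on ℝ² whose restriction to ℝ² \ {0} is of class C¹, with bijective Gauss map G : ∂B_N(0,1) → S¹. For a point x ∈ ℝ² \ {0} and a direction v ∈ S¹, one has P_v(x) = 0 if and only if x is collinear to G⁻¹(v). Consequently, for every x ∈ ℝ² \ {0} there is a direction v₀ ∈ S¹ with P_{v₀}(x) = 0, and the only other direction v ∈ S¹ with P_v(x) = 0 is v = −v₀. -/

import Mathlib

/-!
Whether `0` is the `N`-nearest point of `H_v` to `x` is a first-order condition: `q ↦ N (x - q)`
is convex, so `0` minimises it on `H_v` exactly when `∇N(x) ⊥ H_v`, i.e. when `∇N(x)` is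
parallel to `v`, i.e. when `G(x / N(x)) = ±v`; strict convexity of the unit ball makes nearest
points unique. Since `∇N` is invariant under positive scaling and odd, `G(x / N(x)) = ±v` also
says exactly that `x` is a multiple of `G⁻¹(v)`. Euler's identity `⟪∇N(x), x⟫ = N(x)` keeps
`∇N(x) ≠ 0`, so `v₀ = G(x / N(x))` is a unit vector.
-/

open Set Metric Filter Topology
open scoped RealInnerProductSpace

section FirstOrder

variable {E : Type*} [NormedAddCommGroup E] [NormedSpace ℝ E] {f : E → ℝ} {x : E}

theorem ConvexOn.add_fderiv_sub_le (hf : ConvexOn ℝ univ f) (hx : DifferentiableAt ℝ f x)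
    (y : E) : f x + fderiv ℝ f x (y - x) ≤ f y := by
  have hline : ConvexOn ℝ univ fun t : ℝ => f (x + t • (y - x)) := by
    have h := hf.comp_affineMap (AffineMap.lineMap (k := ℝ) x y)
    rw [preimage_univ] at h
    refine h.congr fun t _ => ?_
    simp [AffineMap.lineMap_apply, add_comm]
  have hderiv : HasDerivAt (fun t : ℝ => f (x + t • (y - x))) (fderiv ℝ f x (y - x)) 0 :=
    hx.hasFDerivAt.hasLineDerivAt (y - x)
  have hslope := hline.le_slope_of_hasDerivAt (mem_univ 0) (mem_univ 1) one_pos hderiv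
  simp only [slope_def_field, zero_smul, add_zero, one_smul, add_sub_cancel, sub_zero,
    div_one] at hslope
  linarith

end FirstOrder

section InnerProductSpace

variable {E : Type*} [NormedAddCommGroup E] [InnerProductSpace ℝ E]

theorem mem_span_singleton_iff_eq_or_eq_neg {v z : E} (hv : ‖v‖ = 1) (hz : z ≠ 0) :
    z ∈ ℝ ∙ v ↔ ‖z‖⁻¹ • z = v ∨ ‖z‖⁻¹ • z = -v := by
  constructor
  · intro hmem
    obtain ⟨a, rfl⟩ := Submodule.mem_span_singleton.1 hmem
    have ha : a ≠ 0 := by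
      rintro rfl
      simp at hz
    rw [norm_smul, hv, mul_one, Real.norm_eq_abs, smul_smul]
    rcases ha.lt_or_gt with ha | ha
    · right
      rw [abs_of_neg ha, inv_neg, neg_mul, inv_mul_cancel₀ ha.ne, neg_smul, one_smul]
    · left
      rw [abs_of_pos ha, inv_mul_cancel₀ ha.ne', one_smul]
  · have hz' : z = ‖z‖ • (‖z‖⁻¹ • z) := by
      rw [smul_smul, mul_inv_cancel₀ (norm_ne_zero_iff.2 hz), one_smul]
    have hvK : v ∈ ℝ ∙ v := Submodule.mem_span_singleton_self v
    rintro (h | h) <;> rw [hz', h]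
    · exact Submodule.smul_mem _ _ hvK
    · exact Submodule.smul_mem _ _ (Submodule.neg_mem _ hvK)

variable [CompleteSpace E]

theorem ConvexOn.isMinOn_sub_iff_gradient_mem_orthogonal {f : E → ℝ} {x : E}
    (hf : ConvexOn ℝ univ f) (hx : DifferentiableAt ℝ f x) (K : Submodule ℝ E) :
    IsMinOn (fun q => f (x - q)) K 0 ↔ gradient f x ∈ Kᗮ := by
  simp only [isMinOn_iff, sub_zero, Submodule.mem_orthogonal', SetLike.mem_coe,
    inner_gradient_left]
  constructor
  · intro hmin q hq
    have hlocal : IsLocalMin (fun t : ℝ => f (x + t • q)) 0 :=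
      Eventually.of_forall fun t => by
        simpa [sub_neg_eq_add] using hmin (-(t • q)) (K.neg_mem (K.smul_mem t hq))
    exact hlocal.hasDerivAt_eq_zero (hx.hasFDerivAt.hasLineDerivAt q)
  · intro horth q hq
    simpa [horth q hq] using hf.add_fderiv_sub_le hx (x - q)

noncomputable def gaussMap (f : E → ℝ) (x : E) : E := ‖gradient f x‖⁻¹ • gradient f x

end InnerProductSpace

namespace Seminorm

section NormedSpace

variable {E : Type*} [NormedAddCommGroup E] [NormedSpace ℝ E] (p : Seminorm ℝ E)

theorem lt_one_of_mem_interior {z : E} (hz : z ∈ interior {x | p x ≤ 1}) : p z < 1 := by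
  have hnhds : ∀ᶠ t in 𝓝 (1 : ℝ), t • z ∈ interior {x | p x ≤ 1} :=
    (continuous_id.smul continuous_const).continuousAt.preimage_mem_nhds
      (by simpa using isOpen_interior.mem_nhds hz)
  obtain ⟨t, ht, ht1⟩ :=
    ((hnhds.filter_mono nhdsWithin_le_nhds).and (self_mem_nhdsWithin (s := Ioi 1))).exists
  have hle : t * p z ≤ 1 := by
    simpa [map_smul_eq_mul, abs_of_pos (one_pos.trans ht1)] using interior_subset ht
  nlinarith [apply_nonneg p z]

theorem eq_of_isMinOn_sub (hdef : ∀ x, p x = 0 → x = 0)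
    (hstrict : StrictConvex ℝ {x | p x ≤ 1}) {K : Set E} (hK : Convex ℝ K) {x q₁ q₂ : E}
    (h₁ : q₁ ∈ K) (h₂ : q₂ ∈ K) (hmin₁ : IsMinOn (fun q => p (x - q)) K q₁)
    (hmin₂ : IsMinOn (fun q => p (x - q)) K q₂) : q₁ = q₂ := by
  have hm₂ : p (x - q₂) = p (x - q₁) := le_antisymm (hmin₂ h₁) (hmin₁ h₂)
  generalize hm₁ : p (x - q₁) = m at hm₂
  rcases (hm₁ ▸ apply_nonneg p (x - q₁) : 0 ≤ m).eq_or_lt with hm | hm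
  · rw [← sub_eq_zero.1 (hdef _ (hm₁.trans hm.symm)),
      ← sub_eq_zero.1 (hdef _ (hm₂.trans hm.symm))]
  by_contra hne
  have hunit : ∀ q, p (x - q) = m → m⁻¹ • (x - q) ∈ {y | p y ≤ 1} := fun q hq => by
    simp [map_smul_eq_mul, hq, abs_of_pos hm, inv_mul_cancel₀ hm.ne']
  have hab : m⁻¹ • (x - q₁) ≠ m⁻¹ • (x - q₂) := by
    rwa [Ne, smul_right_inj (inv_ne_zero hm.ne'), sub_right_inj]
  have half : (0 : ℝ) < 2⁻¹ := by norm_num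
  have hsum : (2⁻¹ : ℝ) + 2⁻¹ = 1 := by norm_num
  have hmid := p.lt_one_of_mem_interior <|
    hstrict (hunit q₁ hm₁) (hunit q₂ hm₂) hab half half hsum
  have hle := hmin₁ (hK h₁ h₂ half.le half.le hsum)
  have hscale :
      (2⁻¹ : ℝ) • m⁻¹ • (x - q₁) + (2⁻¹ : ℝ) • m⁻¹ • (x - q₂) =
        m⁻¹ • (x - ((2⁻¹ : ℝ) • q₁ + (2⁻¹ : ℝ) • q₂)) := by
    module
  rw [hscale, map_smul_eq_mul, Real.norm_eq_abs, abs_of_pos (inv_pos.2 hm),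
    inv_mul_lt_iff₀ hm, mul_one] at hmid
  simp only [mem_ofPred_eq, hm₁] at hle
  linarith

theorem smul_fderiv_smul (c : ℝ) (x : E) :
    c • fderiv ℝ p (c • x) = |c| • fderiv ℝ p x := by
  rw [← fderiv_comp_smul, ← Pi.smul_apply (f := fderiv ℝ p), ← fderiv_const_smul_field]
  congr 1
  ext y
  simp [map_smul_eq_mul]

end NormedSpace

section InnerProductSpace

variable {E : Type*} [NormedAddCommGroup E] [InnerProductSpace ℝ E] [CompleteSpace E]
  (p : Seminorm ℝ E)

theorem gradient_smul_of_pos {c : ℝ} (hc : 0 < c) (x : E) :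
    gradient p (c • x) = gradient p x := by
  have h := p.smul_fderiv_smul c x
  rw [abs_of_pos hc, smul_right_inj hc.ne'] at h
  simp only [gradient, h]

theorem gradient_neg (x : E) : gradient p (-x) = -gradient p x := by
  have h := p.smul_fderiv_smul (-1) x
  rw [abs_neg, abs_one, one_smul, neg_one_smul, neg_one_smul, neg_eq_iff_eq_neg] at h
  simp only [gradient, h, map_neg]

theorem inner_gradient_self {x : E} (hx : DifferentiableAt ℝ p x) :
    ⟪gradient p x, x⟫ = p x := by
  have hline : (fun t : ℝ => p (x + t • x)) =ᶠ[𝓝 0] fun t => (1 + t) * p x := by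
    filter_upwards [Ioi_mem_nhds (neg_one_lt_zero : (-1 : ℝ) < 0)] with t ht
    rw [show x + t • x = (1 + t) • x by module, map_smul_eq_mul, Real.norm_eq_abs,
      abs_of_pos (by linarith [mem_Ioi.1 ht])]
  have hderiv : HasDerivAt (fun t : ℝ => (1 + t) * p x) (p x) 0 := by
    simpa using ((hasDerivAt_id (0 : ℝ)).const_add 1).mul_const (p x)
  rw [inner_gradient_left]
  exact (hx.hasFDerivAt.hasLineDerivAt x).unique (hderiv.congr_of_eventuallyEq hline)

theorem gradient_ne_zero (hdef : ∀ x, p x = 0 → x = 0) {x : E} (hx0 : x ≠ 0)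
    (hx : DifferentiableAt ℝ p x) : gradient p x ≠ 0 := fun h =>
  hx0 (hdef x (by rw [← p.inner_gradient_self hx, h, inner_zero_left]))

theorem gaussMap_smul_of_pos {c : ℝ} (hc : 0 < c) (x : E) :
    gaussMap p (c • x) = gaussMap p x := by
  simp only [gaussMap, p.gradient_smul_of_pos hc]

theorem gaussMap_neg (x : E) : gaussMap p (-x) = -gaussMap p x := by
  simp only [gaussMap, p.gradient_neg, norm_neg, smul_neg]

theorem norm_gaussMap (hdef : ∀ x, p x = 0 → x = 0) {x : E} (hx0 : x ≠ 0)
    (hx : DifferentiableAt ℝ p x) : ‖gaussMap p x‖ = 1 :=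
  norm_smul_inv_norm (p.gradient_ne_zero hdef hx0 hx)

theorem eq_zero_iff_gaussMap_of_isMinOn (hdef : ∀ x, p x = 0 → x = 0)
    (hstrict : StrictConvex ℝ {x | p x ≤ 1}) {x v y : E} (hx0 : x ≠ 0)
    (hx : DifferentiableAt ℝ p x) (hv : ‖v‖ = 1) (hyK : y ∈ (ℝ ∙ v)ᗮ)
    (hy : IsMinOn (fun q => p (x - q)) (ℝ ∙ v)ᗮ y) :
    y = 0 ↔ gaussMap p x = v ∨ gaussMap p x = -v := by
  rw [gaussMap, ← mem_span_singleton_iff_eq_or_eq_neg hv (p.gradient_ne_zero hdef hx0 hx),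
    ← Submodule.orthogonal_orthogonal (ℝ ∙ v),
    ← p.convexOn.isMinOn_sub_iff_gradient_mem_orthogonal hx]
  constructor
  · rintro rfl
    exact hy
  · exact p.eq_of_isMinOn_sub hdef hstrict (ℝ ∙ v)ᗮ.convex hyK (zero_mem _) hy

theorem exists_eq_smul_iff_gaussMap {g : E → E}
    (hg : InvOn g (gaussMap p) {x | p x = 1} (sphere 0 1)) {v x : E} (hv : v ∈ sphere 0 1)
    (hx : 0 < p x) : (∃ c : ℝ, x = c • g v) ↔ gaussMap p x = v ∨ gaussMap p x = -v := by
  set u := (p x)⁻¹ • x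
  have hu : p u = 1 := by
    rw [map_smul_eq_mul, norm_inv, Real.norm_of_nonneg hx.le, inv_mul_cancel₀ hx.ne']
  have hu' : p (-u) = 1 := by rwa [map_neg_eq_map]
  have hxu : x = p x • u := by rw [smul_smul, mul_inv_cancel₀ hx.ne', one_smul]
  have hGu : gaussMap p u = gaussMap p x := p.gaussMap_smul_of_pos (inv_pos.2 hx) x
  constructor
  · rintro ⟨c, rfl⟩
    rcases lt_trichotomy c 0 with hc | rfl | hc
    · right
      rw [← neg_neg c, neg_smul, ← smul_neg, p.gaussMap_smul_of_pos (neg_pos.2 hc),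
        p.gaussMap_neg, hg.2 hv]
    · simp at hx
    · left
      rw [p.gaussMap_smul_of_pos hc, hg.2 hv]
  · rintro (h | h)
    · exact ⟨p x, by rw [← h, ← hGu, hg.1 hu, ← hxu]⟩
    · refine ⟨-p x, ?_⟩
      rw [← neg_neg v, ← h, ← hGu, ← p.gaussMap_neg, hg.1 hu', smul_neg, neg_smul, neg_neg,
        ← hxu]

end InnerProductSpace

end Seminorm

theorem projection_vanishes_iff_collinear_general
    (N : EuclideanSpace ℝ (Fin 2) → ℝ)
    (hN_add : ∀ x y : EuclideanSpace ℝ (Fin 2), N (x + y) ≤ N x + N y)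
    (hN_smul : ∀ (c : ℝ) (x : EuclideanSpace ℝ (Fin 2)), N (c • x) = |c| * N x)
    (hN_zero : ∀ x : EuclideanSpace ℝ (Fin 2), N x = 0 → x = 0)
    (hN_strict : StrictConvex ℝ {x : EuclideanSpace ℝ (Fin 2) | N x ≤ 1})
    (hN_C1 : ContDiffOn ℝ 1 N ({0}ᶜ : Set (EuclideanSpace ℝ (Fin 2))))
    (Ginv : EuclideanSpace ℝ (Fin 2) → EuclideanSpace ℝ (Fin 2))
    (hGinv : Set.InvOn Ginv
      (fun x : EuclideanSpace ℝ (Fin 2) => ‖gradient N x‖⁻¹ • gradient N x)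
      {x : EuclideanSpace ℝ (Fin 2) | N x = 1}
      (sphere (0 : EuclideanSpace ℝ (Fin 2)) 1))
    -- `P v` is the closest-point projection (w.r.t. `N`) onto the line `H_v`:
    (P : EuclideanSpace ℝ (Fin 2) → EuclideanSpace ℝ (Fin 2) → EuclideanSpace ℝ (Fin 2))
    (hP : ∀ v ∈ sphere (0 : EuclideanSpace ℝ (Fin 2)) 1, ∀ x : EuclideanSpace ℝ (Fin 2),
      ⟪v, P v x⟫ = 0 ∧
        ∀ q : EuclideanSpace ℝ (Fin 2), ⟪v, q⟫ = 0 → N (x - P v x) ≤ N (x - q)) :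
    (∀ v ∈ sphere (0 : EuclideanSpace ℝ (Fin 2)) 1,
      ∀ x : EuclideanSpace ℝ (Fin 2), x ≠ 0 →
        (P v x = 0 ↔ ∃ c : ℝ, x = c • Ginv v)) ∧
    (∀ x : EuclideanSpace ℝ (Fin 2), x ≠ 0 →
      ∃ v₀ ∈ sphere (0 : EuclideanSpace ℝ (Fin 2)) 1, P v₀ x = 0 ∧
        ∀ v ∈ sphere (0 : EuclideanSpace ℝ (Fin 2)) 1,
          P v x = 0 → v = v₀ ∨ v = -v₀) := by
  let p : Seminorm ℝ (EuclideanSpace ℝ (Fin 2)) :=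
    Seminorm.of N hN_add fun c x => by rw [hN_smul, Real.norm_eq_abs]
  have hdiff : ∀ x ≠ 0, DifferentiableAt ℝ p x := fun x hx =>
    (hN_C1.contDiffAt (isOpen_compl_singleton.mem_nhds hx)).differentiableAt one_ne_zero
  have hproj : ∀ v ∈ sphere 0 1, ∀ x ≠ 0,
      P v x = 0 ↔ gaussMap p x = v ∨ gaussMap p x = -v :=
    fun v hv x hx => p.eq_zero_iff_gaussMap_of_isMinOn hN_zero hN_strict hx (hdiff x hx)
      (mem_sphere_zero_iff_norm.1 hv)
      (Submodule.mem_orthogonal_singleton_iff_inner_right.2 (hP v hv x).1)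
      fun q hq => (hP v hv x).2 q (Submodule.mem_orthogonal_singleton_iff_inner_right.1 hq)
  have hcollinear : ∀ v ∈ sphere 0 1, ∀ x ≠ 0,
      (∃ c : ℝ, x = c • Ginv v) ↔ gaussMap p x = v ∨ gaussMap p x = -v := fun v hv x hx =>
    p.exists_eq_smul_iff_gaussMap hGinv hv
      ((apply_nonneg p x).lt_of_ne' (mt (hN_zero x) hx))
  refine ⟨fun v hv x hx => (hproj v hv x hx).trans (hcollinear v hv x hx).symm, fun x hx => ?_⟩
  have hunit : gaussMap p x ∈ sphere 0 1 :=
    mem_sphere_zero_iff_norm.2 (p.norm_gaussMap hN_zero hx (hdiff x hx))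
  refine ⟨gaussMap p x, hunit, (hproj _ hunit x hx).2 (Or.inl rfl), fun v hv hPv => ?_⟩
  rcases (hproj v hv x hx).1 hPv with h | h
  exacts [Or.inl h.symm, Or.inr (by rw [h, neg_neg])]

/-- for a strictly convex norm `N` on ℝ², `C¹` away from `0`, with
bijective Gauss map `G`: for `x ≠ 0` and `v ∈ S¹`, `P_v(x) = 0` iff `x` is
collinear to `G⁻¹(v)`; consequently every `x ≠ 0` admits a direction `v₀ ∈ S¹`
with `P_{v₀}(x) = 0`, and the only other such direction is `−v₀`. -/
theorem projection_vanishes_iff_collinear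
    (N : EuclideanSpace ℝ (Fin 2) → ℝ)
    (hN_add : ∀ x y : EuclideanSpace ℝ (Fin 2), N (x + y) ≤ N x + N y)
    (hN_smul : ∀ (c : ℝ) (x : EuclideanSpace ℝ (Fin 2)), N (c • x) = |c| * N x)
    (hN_zero : ∀ x : EuclideanSpace ℝ (Fin 2), N x = 0 → x = 0)
    (hN_strict : StrictConvex ℝ {x : EuclideanSpace ℝ (Fin 2) | N x ≤ 1})
    (hN_C1 : ContDiffOn ℝ 1 N ({0}ᶜ : Set (EuclideanSpace ℝ (Fin 2))))
    -- the Gauss map `G x = ∇N(x)/‖∇N(x)‖` is a bijection from the `N`-unit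
    -- sphere onto `S¹`, with inverse `Ginv`:
    (hG_bij : Set.BijOn
      (fun x : EuclideanSpace ℝ (Fin 2) => ‖gradient N x‖⁻¹ • gradient N x)
      {x : EuclideanSpace ℝ (Fin 2) | N x = 1}
      (sphere (0 : EuclideanSpace ℝ (Fin 2)) 1))
    (Ginv : EuclideanSpace ℝ (Fin 2) → EuclideanSpace ℝ (Fin 2))
    (hGinv : Set.InvOn Ginv
      (fun x : EuclideanSpace ℝ (Fin 2) => ‖gradient N x‖⁻¹ • gradient N x)
      {x : EuclideanSpace ℝ (Fin 2) | N x = 1}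
      (sphere (0 : EuclideanSpace ℝ (Fin 2)) 1))
    -- `P v` is the closest-point projection (w.r.t. `N`) onto the line `H_v`:
    (P : EuclideanSpace ℝ (Fin 2) → EuclideanSpace ℝ (Fin 2) → EuclideanSpace ℝ (Fin 2))
    (hP : ∀ v ∈ sphere (0 : EuclideanSpace ℝ (Fin 2)) 1, ∀ x : EuclideanSpace ℝ (Fin 2),
      ⟪v, P v x⟫ = 0 ∧
        ∀ q : EuclideanSpace ℝ (Fin 2), ⟪v, q⟫ = 0 → N (x - P v x) ≤ N (x - q)) :
    (∀ v ∈ sphere (0 : EuclideanSpace ℝ (Fin 2)) 1,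
      ∀ x : EuclideanSpace ℝ (Fin 2), x ≠ 0 →
        (P v x = 0 ↔ ∃ c : ℝ, x = c • Ginv v)) ∧
    (∀ x : EuclideanSpace ℝ (Fin 2), x ≠ 0 →
      ∃ v₀ ∈ sphere (0 : EuclideanSpace ℝ (Fin 2)) 1, P v₀ x = 0 ∧
        ∀ v ∈ sphere (0 : EuclideanSpace ℝ (Fin 2)) 1,
          P v x = 0 → v = v₀ ∨ v = -v₀) :=
  projection_vanishes_iff_collinear_general N hN_add hN_smul hN_zero hN_strict hN_C1 Ginv hGinv P hP
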